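/- Let W and W' be independent standard one-dimensional Brownian motions, and let T₀, T₁ be exponentially distributed random variables with parameters λ⁰¹ > 0 and λ¹⁰ > 0 respectively, with W, W', T₀, T₁ mutually independent. Let σ₀, σ₁ > 0, a₀, a₁ ∈ ℝ, set β_i := 2a_i/σ_i² − 1, and define M := exp( −(σ₀ W_{T₀} + (a₀ − σ₀²/2) T₀) − (σ₁ W'_{T₁} + (a₁ − σ₁²/2) T₁) ). Assume 0 < β₀ < β₁ and let β ∈ (β₀, β₁) satisfy σ₀²σ₁² β (β₀ − β)(β₁ − β) + 2σ₀²(β₀ − β)λ¹⁰ + 2σ₁²(β₁ − β)λ⁰¹ = 0. Then there exists ε > 0 such that E[M^{β+ε}] < ∞; in particular E[M^β (ln M)^+] < ∞. -/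

import Mathlib

/-!
Conditionally on `T₀ = t`, `σ₀ W_t` is centred Gaussian with variance `σ₀² t`, so
`E[e^{θ W_{T₀} + κ T₀}] = E[e^{(θ²/2 + κ) T₀}]`, which is finite as soon as `θ²/2 + κ < λ⁰¹`.
For `M^q` this condition reads `D₀(q) > 0`, and likewise for the second half of the cycle; the
two halves are independent, so `E[M^q]` is the product of the two finite factors. At the root `β`
one has `D₀(β) D₁(β) = λ⁰¹ λ¹⁰` with `D₁(β) > 0`, so both denominators stay positive on a
neighbourhood of `β` and some `q > β` works. Finally `x^β (ln x)⁺ ≤ x^q / (q - β)`.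
-/

open MeasureTheory ProbabilityTheory

/-- A standard one-dimensional Brownian motion started at `0`: each `W t` is measurable,
paths start at `0` and are continuous, increments over `[s,t]` (for `0 ≤ s ≤ t`) are centered
Gaussian with variance `t - s`, and increments over consecutive intervals are independent. -/
def IsStandardBM {Ω : Type*} [MeasurableSpace Ω] (P : Measure Ω) (W : ℝ → Ω → ℝ) : Prop :=
  (∀ t : ℝ, Measurable (W t)) ∧
  (∀ ω, W 0 ω = 0) ∧
  (∀ ω, Continuous fun t => W t ω) ∧
  (∀ s t : ℝ, 0 ≤ s → s ≤ t →
    Measure.map (fun ω => W t ω - W s ω) P = gaussianReal 0 (Real.toNNReal (t - s))) ∧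
  ∀ (n : ℕ) (u : ℕ → ℝ), Monotone u → 0 ≤ u 0 →
    iIndepFun
      (fun i : Fin n => fun ω => W (u (i + 1)) ω - W (u i) ω) P

open Real Filter Topology
open scoped NNReal ENNReal

/-- The denominator `Dᵢ` of the paper, with `s = σᵢ²` and `b = βᵢ`. -/
noncomputable def cycleDenom (l s b q : ℝ) : ℝ := l + s / 2 * q * (b - q)

lemma cycleDenom_eq_sub_cumulant {σ : ℝ} (hσ : σ ≠ 0) (l a q : ℝ) :
    cycleDenom l (σ ^ 2) (2 * a / σ ^ 2 - 1) q
      = l - ((-(q * σ)) ^ 2 / 2 + -(q * (a - σ ^ 2 / 2))) := by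
  unfold cycleDenom
  field_simp
  ring

lemma cycleDenom_pos_of_root {l01 l10 s0 s1 b0 b1 β : ℝ} (hl01 : 0 < l01) (hl10 : 0 < l10)
    (hs1 : 0 < s1) (hβ0 : 0 < β) (hβ1 : β < b1)
    (hroot : s0 * s1 * β * (b0 - β) * (b1 - β) + 2 * s0 * (b0 - β) * l10
        + 2 * s1 * (b1 - β) * l01 = 0) :
    0 < cycleDenom l01 s0 b0 β ∧ 0 < cycleDenom l10 s1 b1 β := by
  have hD1 : 0 < cycleDenom l10 s1 b1 β := by
    unfold cycleDenom
    have := mul_pos (mul_pos (half_pos hs1) hβ0) (sub_pos.2 hβ1)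
    linarith
  have hprod : cycleDenom l01 s0 b0 β * cycleDenom l10 s1 b1 β = l01 * l10 := by
    unfold cycleDenom
    linear_combination (β / 4) * hroot
  exact ⟨pos_of_mul_pos_left (hprod ▸ mul_pos hl01 hl10) hD1.le, hD1⟩

lemma exists_gt_cycleDenom_pos {l01 l10 s0 s1 b0 b1 β : ℝ}
    (h0 : 0 < cycleDenom l01 s0 b0 β) (h1 : 0 < cycleDenom l10 s1 b1 β) :
    ∃ q, β < q ∧ 0 < cycleDenom l01 s0 b0 q ∧ 0 < cycleDenom l10 s1 b1 q := by
  have hcont : ∀ l s b, Continuous (cycleDenom l s b) := fun l s b => by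
    unfold cycleDenom; fun_prop
  have hev : ∀ᶠ q in 𝓝 β, 0 < cycleDenom l01 s0 b0 q ∧ 0 < cycleDenom l10 s1 b1 q :=
    ((hcont _ _ _).continuousAt.eventually (lt_mem_nhds h0)).and
      ((hcont _ _ _).continuousAt.eventually (lt_mem_nhds h1))
  obtain ⟨q, hq, hβq⟩ := (hev.filter_mono nhdsWithin_le_nhds).and self_mem_nhdsWithin |>.exists
    (f := 𝓝[>] β)
  exact ⟨q, hβq, hq⟩

lemma rpow_mul_max_log_le {x : ℝ} (hx : 0 < x) (b : ℝ) {ε : ℝ} (hε : 0 < ε) :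
    x ^ b * max (log x) 0 ≤ ε⁻¹ * x ^ (b + ε) := by
  have hlog : max (log x) 0 ≤ x ^ ε / ε :=
    max_le (log_le_rpow_div hx.le hε) (by positivity)
  calc x ^ b * max (log x) 0 ≤ x ^ b * (x ^ ε / ε) := by gcongr
    _ = ε⁻¹ * x ^ (b + ε) := by rw [rpow_add hx]; ring

lemma lintegral_rpow_mul_max_log_lt_top {Ω : Type*} [MeasurableSpace Ω] {P : Measure Ω}
    {X : Ω → ℝ} (hX : ∀ ω, 0 < X ω) (b : ℝ) {ε : ℝ} (hε : 0 < ε)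
    (h : ∫⁻ ω, ENNReal.ofReal (X ω ^ (b + ε)) ∂P < ∞) :
    ∫⁻ ω, ENNReal.ofReal (X ω ^ b * max (log (X ω)) 0) ∂P < ∞ :=
  calc ∫⁻ ω, ENNReal.ofReal (X ω ^ b * max (log (X ω)) 0) ∂P
      ≤ ∫⁻ ω, ENNReal.ofReal ε⁻¹ * ENNReal.ofReal (X ω ^ (b + ε)) ∂P := by
        refine lintegral_mono fun ω => ?_
        rw [← ENNReal.ofReal_mul (by positivity)]
        exact ENNReal.ofReal_le_ofReal (rpow_mul_max_log_le (hX ω) b hε)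
    _ = ENNReal.ofReal ε⁻¹ * ∫⁻ ω, ENNReal.ofReal (X ω ^ (b + ε)) ∂P :=
        lintegral_const_mul' _ _ ENNReal.ofReal_ne_top
    _ < ∞ := ENNReal.mul_lt_top ENNReal.ofReal_lt_top h

lemma ae_nonneg_expMeasure (l : ℝ) : ∀ᵐ t ∂expMeasure l, 0 ≤ t := by
  have : expMeasure l (Set.Iio 0) = 0 := by
    rw [expMeasure, gammaMeasure, withDensity_apply _ measurableSet_Iio]
    exact lintegral_gammaPDF_of_nonpos le_rfl
  rw [ae_iff]
  simp only [not_le]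
  exact this

lemma lintegral_exp_mul_expMeasure_lt_top {l s : ℝ} (hs : s < l) :
    ∫⁻ t, ENNReal.ofReal (exp (s * t)) ∂expMeasure l < ∞ := by
  have hdens : ∀ t, exponentialPDF l t * ENNReal.ofReal (exp (s * t))
      = (Set.Ici 0).indicator (fun t => ENNReal.ofReal (l * exp ((s - l) * t))) t := by
    intro t
    rcases lt_or_ge t 0 with ht | ht
    · simp [exponentialPDF_of_neg ht, ht]
    · rw [exponentialPDF_of_nonneg ht, Set.indicator_of_mem (Set.mem_Ici.2 ht),
        ← ENNReal.ofReal_mul' (exp_pos _).le, mul_assoc, ← exp_add]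
      ring_nf
  change ∫⁻ t, _ ∂(volume.withDensity (exponentialPDF l)) < ∞
  rw [lintegral_withDensity_eq_lintegral_mul _ (show Measurable (exponentialPDF l) from
      (measurable_exponentialPDFReal l).ennreal_ofReal) (by fun_prop)]
  simp only [Pi.mul_apply]
  rw [lintegral_congr hdens, lintegral_indicator measurableSet_Ici]
  refine IntegrableOn.setLIntegral_lt_top ?_
  rw [integrableOn_Ici_iff_integrableOn_Ioi]
  exact (integrableOn_exp_mul_Ioi (sub_neg.2 hs) 0).const_mul l

lemma lintegral_exp_mul_of_map_eq_gaussianReal {Ω : Type*} [MeasurableSpace Ω] {P : Measure Ω}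
    {X : Ω → ℝ} (hX : Measurable X) {μ : ℝ} {v : ℝ≥0} (hlaw : P.map X = gaussianReal μ v)
    (c : ℝ) :
    ∫⁻ ω, ENNReal.ofReal (exp (c * X ω)) ∂P = ENNReal.ofReal (exp (μ * c + v * c ^ 2 / 2)) := by
  rw [← lintegral_map (f := fun x => ENNReal.ofReal (exp (c * x))) (by fun_prop) hX, hlaw,
    ← mgf_gaussianReal Measure.map_id c,
    ← ofReal_integral_eq_lintegral_ofReal (integrable_exp_mul_gaussianReal c)
      (ae_of_all _ fun _ => (exp_pos _).le)]
  rfl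

lemma indep_sup_sup_of_iIndep {Ω ι : Type*} {mΩ : MeasurableSpace Ω} {P : Measure Ω}
    {m : ι → MeasurableSpace Ω} (hle : ∀ i, m i ≤ mΩ) (h : iIndep m P) {i j k l : ι}
    (hd : Disjoint ({i, j} : Set ι) {k, l}) :
    Indep (m i ⊔ m j) (m k ⊔ m l) P := by
  simpa only [iSup_insert, iSup_singleton] using indep_iSup_of_disjoint hle h hd

section IndependentTime

variable {Ω β : Type*} {G mΩ : MeasurableSpace Ω} [mβ : MeasurableSpace β]

lemma measurable_comp_prodMk_sup_comap {γ : Type*} [MeasurableSpace γ] {T : Ω → β}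
    {F : β × Ω → γ} (hF : Measurable[mβ.prod G] F) :
    Measurable[G ⊔ mβ.comap T] fun ω => F (T ω, ω) :=
  hF.comp (((comap_measurable T).mono le_sup_right le_rfl).prodMk (measurable_id'' le_sup_left))

lemma lintegral_comp_prodMk_of_indep {P : Measure Ω} [IsFiniteMeasure P] (hG : G ≤ mΩ)
    {T : Ω → β} (hT : Measurable T) (hind : Indep G (mβ.comap T) P) {F : β × Ω → ℝ≥0∞}
    (hF : Measurable[mβ.prod G] F) :
    ∫⁻ ω, F (T ω, ω) ∂P = ∫⁻ b, ∫⁻ ω, F (b, ω) ∂P ∂P.map T := by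
  have hpair : Measurable[mΩ, mβ.prod G] fun ω => (T ω, ω) := hT.prodMk (measurable_id'' hG)
  have hmap : @Measure.map _ _ _ (mβ.prod G) (fun ω => (T ω, ω)) P
      = @Measure.prod _ _ _ G (P.map T) (P.trim hG) := by
    refine (@Measure.prod_eq _ _ _ G _ _ _ _ _ fun s u hs hu => ?_).symm
    rw [Measure.map_apply hpair (hs.prod hu), Set.mk_preimage_prod, Set.preimage_id',
      Measure.map_apply hT hs, trim_measurableSet_eq hG hu,
      (Indep_iff _ _ _).1 hind.symm _ u ⟨s, hs, rfl⟩ hu]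
  rw [← @lintegral_map _ _ _ (mβ.prod G) _ _ _ hF hpair, hmap,
    @lintegral_prod _ _ _ G _ _ _ _ hF.aemeasurable]
  refine lintegral_congr fun b => lintegral_trim hG ?_
  exact hF.comp measurable_prodMk_left

end IndependentTime

section BrownianMotionAtIndependentTime

variable {Ω : Type*} {G mΩ : MeasurableSpace Ω} {P : Measure Ω}
  {W : ℝ → Ω → ℝ} {T : Ω → ℝ}

lemma measurable_exp_affine_uncurry (hWG : ∀ t, Measurable[G] (W t))
    (hWc : ∀ ω, Continuous fun t => W t ω) (θ κ : ℝ) :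
    Measurable[Real.measurableSpace.prod G]
      fun p : ℝ × Ω => ENNReal.ofReal (exp (θ * W p.1 p.2 + κ * p.1)) := by
  have hW : Measurable[Real.measurableSpace.prod G] (Function.uncurry W) :=
    measurable_uncurry_of_continuous_of_measurable hWc hWG
  exact ENNReal.measurable_ofReal.comp
    (measurable_exp.comp ((hW.const_mul θ).add (measurable_fst.const_mul κ)))

lemma lintegral_exp_affine_at_indep_time [IsFiniteMeasure P] (hG : G ≤ mΩ)
    (hWG : ∀ t, Measurable[G] (W t)) (hWc : ∀ ω, Continuous fun t => W t ω)
    (hlaw : ∀ t, 0 ≤ t → P.map (W t) = gaussianReal 0 t.toNNReal)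
    (hT : Measurable T) (hT0 : ∀ᵐ t ∂P.map T, 0 ≤ t)
    (hind : Indep G (Real.measurableSpace.comap T) P) (θ κ : ℝ) :
    ∫⁻ ω, ENNReal.ofReal (exp (θ * W (T ω) ω + κ * T ω)) ∂P
      = ∫⁻ t, ENNReal.ofReal (exp ((θ ^ 2 / 2 + κ) * t)) ∂P.map T := by
  rw [lintegral_comp_prodMk_of_indep hG hT hind (measurable_exp_affine_uncurry hWG hWc θ κ)]
  refine lintegral_congr_ae (hT0.mono fun t ht => ?_)
  have hsplit : ∀ ω, ENNReal.ofReal (exp (θ * W t ω + κ * t))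
      = ENNReal.ofReal (exp (κ * t)) * ENNReal.ofReal (exp (θ * W t ω)) := fun ω => by
    rw [← ENNReal.ofReal_mul (exp_pos _).le, ← exp_add, add_comm]
  simp only [hsplit]
  rw [lintegral_const_mul' _ _ ENNReal.ofReal_ne_top,
    lintegral_exp_mul_of_map_eq_gaussianReal ((hWG t).mono hG le_rfl) (hlaw t ht),
    ← ENNReal.ofReal_mul (exp_pos _).le, ← exp_add, coe_toNNReal t ht]
  ring_nf

end BrownianMotionAtIndependentTime

namespace IsStandardBM

variable {Ω : Type*} [MeasurableSpace Ω] {P : Measure Ω} {W : ℝ → Ω → ℝ}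

lemma map_eq_gaussianReal (hW : IsStandardBM P W) {t : ℝ} (ht : 0 ≤ t) :
    P.map (W t) = gaussianReal 0 t.toNNReal := by
  simpa [hW.2.1] using hW.2.2.2.1 0 t le_rfl ht

lemma measurable_exp_affine_at_time (hW : IsStandardBM P W) (T : Ω → ℝ) (θ κ : ℝ) :
    Measurable[(⨆ t, MeasurableSpace.comap (W t) Real.measurableSpace)
        ⊔ MeasurableSpace.comap T Real.measurableSpace]
      fun ω => ENNReal.ofReal (exp (θ * W (T ω) ω + κ * T ω)) :=
  measurable_comp_prodMk_sup_comap <| measurable_exp_affine_uncurry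
    (fun t => Measurable.of_comap_le (le_iSup (fun t => MeasurableSpace.comap (W t) _) t))
    hW.2.2.1 θ κ

lemma lintegral_exp_affine_at_exp_time_lt_top [IsFiniteMeasure P] (hW : IsStandardBM P W)
    {T : Ω → ℝ} (hT : Measurable T) {l : ℝ} (hTlaw : P.map T = expMeasure l)
    (hind : Indep (⨆ t, MeasurableSpace.comap (W t) Real.measurableSpace)
      (MeasurableSpace.comap T Real.measurableSpace) P)
    {θ κ : ℝ} (hθκ : θ ^ 2 / 2 + κ < l) :
    ∫⁻ ω, ENNReal.ofReal (exp (θ * W (T ω) ω + κ * T ω)) ∂P < ∞ := by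
  rw [lintegral_exp_affine_at_indep_time (iSup_le fun t => (hW.1 t).comap_le)
    (fun t => Measurable.of_comap_le (le_iSup (fun t => MeasurableSpace.comap (W t) _) t))
    hW.2.2.1 (fun _ => hW.map_eq_gaussianReal) hT (hTlaw ▸ ae_nonneg_expMeasure l) hind, hTlaw]
  exact lintegral_exp_mul_expMeasure_lt_top hθκ

end IsStandardBM

theorem moment_slightly_above_beta_finite_general
    {Ω : Type*} [MeasurableSpace Ω] (P : Measure Ω) [IsProbabilityMeasure P]
    (W W' : ℝ → Ω → ℝ) (T0 T1 : Ω → ℝ) (l01 l10 σ0 σ1 a0 a1 β : ℝ)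
    (hW : IsStandardBM P W) (hW' : IsStandardBM P W')
    (hT0 : Measurable T0) (hT1 : Measurable T1)
    (hl01 : 0 < l01) (hl10 : 0 < l10)
    (hT0law : Measure.map T0 P = expMeasure l01)
    (hT1law : Measure.map T1 P = expMeasure l10)
    (hindep : iIndep
      ![⨆ t : ℝ, MeasurableSpace.comap (W t) Real.measurableSpace,
        ⨆ t : ℝ, MeasurableSpace.comap (W' t) Real.measurableSpace,
        MeasurableSpace.comap T0 Real.measurableSpace,
        MeasurableSpace.comap T1 Real.measurableSpace] P)
    (hσ0 : 0 < σ0) (hσ1 : 0 < σ1)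
    (hβ0 : 0 < 2 * a0 / σ0 ^ 2 - 1)
    (hβ : β ∈ Set.Ioo (2 * a0 / σ0 ^ 2 - 1) (2 * a1 / σ1 ^ 2 - 1))
    (hroot : σ0 ^ 2 * σ1 ^ 2 * β * ((2 * a0 / σ0 ^ 2 - 1) - β) * ((2 * a1 / σ1 ^ 2 - 1) - β)
        + 2 * σ0 ^ 2 * ((2 * a0 / σ0 ^ 2 - 1) - β) * l10
        + 2 * σ1 ^ 2 * ((2 * a1 / σ1 ^ 2 - 1) - β) * l01 = 0) :
    (∃ ε : ℝ, 0 < ε ∧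
      ∫⁻ ω, ENNReal.ofReal
          (Real.exp (-(σ0 * W (T0 ω) ω + (a0 - σ0 ^ 2 / 2) * T0 ω)
              - (σ1 * W' (T1 ω) ω + (a1 - σ1 ^ 2 / 2) * T1 ω)) ^ (β + ε)) ∂P < ⊤) ∧
    ∫⁻ ω, ENNReal.ofReal
        (Real.exp (-(σ0 * W (T0 ω) ω + (a0 - σ0 ^ 2 / 2) * T0 ω)
            - (σ1 * W' (T1 ω) ω + (a1 - σ1 ^ 2 / 2) * T1 ω)) ^ β
          * max (Real.log (Real.exp (-(σ0 * W (T0 ω) ω + (a0 - σ0 ^ 2 / 2) * T0 ω)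
              - (σ1 * W' (T1 ω) ω + (a1 - σ1 ^ 2 / 2) * T1 ω)))) 0) ∂P < ⊤ := by
  obtain ⟨hD0, hD1⟩ :=
    cycleDenom_pos_of_root hl01 hl10 (by positivity) (hβ0.trans hβ.1) hβ.2 hroot
  obtain ⟨q, hβq, hq0, hq1⟩ := exists_gt_cycleDenom_pos hD0 hD1
  rw [cycleDenom_eq_sub_cumulant hσ0.ne', sub_pos] at hq0
  rw [cycleDenom_eq_sub_cumulant hσ1.ne', sub_pos] at hq1
  set m := ![⨆ t : ℝ, MeasurableSpace.comap (W t) Real.measurableSpace,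
    ⨆ t : ℝ, MeasurableSpace.comap (W' t) Real.measurableSpace,
    MeasurableSpace.comap T0 Real.measurableSpace, MeasurableSpace.comap T1 Real.measurableSpace]
  have hle : ∀ i, m i ≤ ‹MeasurableSpace Ω› := by
    intro i
    fin_cases i
    exacts [iSup_le fun t => (hW.1 t).comap_le, iSup_le fun t => (hW'.1 t).comap_le,
      hT0.comap_le, hT1.comap_le]
  have hM (ω : Ω) : ENNReal.ofReal (Real.exp (-(σ0 * W (T0 ω) ω + (a0 - σ0 ^ 2 / 2) * T0 ω)
        - (σ1 * W' (T1 ω) ω + (a1 - σ1 ^ 2 / 2) * T1 ω)) ^ q)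
      = ENNReal.ofReal (exp (-(q * σ0) * W (T0 ω) ω + -(q * (a0 - σ0 ^ 2 / 2)) * T0 ω))
        * ENNReal.ofReal (exp (-(q * σ1) * W' (T1 ω) ω + -(q * (a1 - σ1 ^ 2 / 2)) * T1 ω)) := by
    rw [← exp_mul, ← ENNReal.ofReal_mul (exp_pos _).le, ← exp_add]
    ring_nf
  have hq : ∫⁻ ω, ENNReal.ofReal (Real.exp (-(σ0 * W (T0 ω) ω + (a0 - σ0 ^ 2 / 2) * T0 ω)
        - (σ1 * W' (T1 ω) ω + (a1 - σ1 ^ 2 / 2) * T1 ω)) ^ q) ∂P < ⊤ := by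
    rw [lintegral_congr hM, lintegral_mul_eq_lintegral_mul_lintegral_of_independent_measurableSpace
      (sup_le (hle 0) (hle 2)) (sup_le (hle 1) (hle 3))
      (indep_sup_sup_of_iIndep hle hindep (by simp [Set.disjoint_left]))
      (hW.measurable_exp_affine_at_time T0 _ _) (hW'.measurable_exp_affine_at_time T1 _ _)]
    exact ENNReal.mul_lt_top
      (hW.lintegral_exp_affine_at_exp_time_lt_top hT0 hT0law
        (hindep.indep (show (0 : Fin 4) ≠ 2 by decide)) hq0)
      (hW'.lintegral_exp_affine_at_exp_time_lt_top hT1 hT1law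
        (hindep.indep (show (1 : Fin 4) ≠ 3 by decide)) hq1)
  have hε : 0 < q - β := sub_pos.2 hβq
  rw [← add_sub_cancel β q] at hq
  exact ⟨⟨q - β, hε, hq⟩, lintegral_rpow_mul_max_log_lt_top (fun _ => exp_pos _) β hε hq⟩

/-- At the root `β` of equation (7), the cycle factor `M = e^{-V_{τ₂}}` has a finite moment of
some order `β + ε` with `ε > 0`; in particular `E[M^β (ln M)⁺] < ∞`. -/
theorem moment_slightly_above_beta_finite
    {Ω : Type*} [MeasurableSpace Ω] (P : Measure Ω) [IsProbabilityMeasure P]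
    (W W' : ℝ → Ω → ℝ) (T0 T1 : Ω → ℝ) (l01 l10 σ0 σ1 a0 a1 β : ℝ)
    (hW : IsStandardBM P W) (hW' : IsStandardBM P W')
    (hT0 : Measurable T0) (hT1 : Measurable T1)
    (hl01 : 0 < l01) (hl10 : 0 < l10)
    (hT0law : Measure.map T0 P = expMeasure l01)
    (hT1law : Measure.map T1 P = expMeasure l10)
    (hindep : iIndep
      ![⨆ t : ℝ, MeasurableSpace.comap (W t) Real.measurableSpace,
        ⨆ t : ℝ, MeasurableSpace.comap (W' t) Real.measurableSpace,
        MeasurableSpace.comap T0 Real.measurableSpace,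
        MeasurableSpace.comap T1 Real.measurableSpace] P)
    (hσ0 : 0 < σ0) (hσ1 : 0 < σ1)
    (hβ0 : 0 < 2 * a0 / σ0 ^ 2 - 1)
    (hβ01 : 2 * a0 / σ0 ^ 2 - 1 < 2 * a1 / σ1 ^ 2 - 1)
    (hβ : β ∈ Set.Ioo (2 * a0 / σ0 ^ 2 - 1) (2 * a1 / σ1 ^ 2 - 1))
    (hroot : σ0 ^ 2 * σ1 ^ 2 * β * ((2 * a0 / σ0 ^ 2 - 1) - β) * ((2 * a1 / σ1 ^ 2 - 1) - β)
        + 2 * σ0 ^ 2 * ((2 * a0 / σ0 ^ 2 - 1) - β) * l10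
        + 2 * σ1 ^ 2 * ((2 * a1 / σ1 ^ 2 - 1) - β) * l01 = 0) :
    (∃ ε : ℝ, 0 < ε ∧
      ∫⁻ ω, ENNReal.ofReal
          (Real.exp (-(σ0 * W (T0 ω) ω + (a0 - σ0 ^ 2 / 2) * T0 ω)
              - (σ1 * W' (T1 ω) ω + (a1 - σ1 ^ 2 / 2) * T1 ω)) ^ (β + ε)) ∂P < ⊤) ∧
    ∫⁻ ω, ENNReal.ofReal
        (Real.exp (-(σ0 * W (T0 ω) ω + (a0 - σ0 ^ 2 / 2) * T0 ω)
            - (σ1 * W' (T1 ω) ω + (a1 - σ1 ^ 2 / 2) * T1 ω)) ^ β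
          * max (Real.log (Real.exp (-(σ0 * W (T0 ω) ω + (a0 - σ0 ^ 2 / 2) * T0 ω)
              - (σ1 * W' (T1 ω) ω + (a1 - σ1 ^ 2 / 2) * T1 ω)))) 0) ∂P < ⊤ :=
  moment_slightly_above_beta_finite_general P W W' T0 T1 l01 l10 σ0 σ1 a0 a1 β hW hW' hT0 hT1 hl01
    hl10 hT0law hT1law hindep hσ0 hσ1 hβ0 hβ hroot
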